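/- Let A be a Codazzi tensor on M^n, n ≥ 3, with exactly two distinct eigenvalue functions μ and λ, dim V_μ = 1, and X ∈ V_μ a unit vector field. Then (Y,Z) ↦ g(∇_Y X, Z) is symmetric (equivalently X is locally a gradient field) if and only if D_Y μ = 0 for all Y ∈ V_λ. -/

import Mathlib

/-- Abstract axiomatization of the space of smooth vector fields `VF` on a
Riemannian manifold with point set `M`: a module over the ring of functions
`M → ℝ`, together with the metric `g`, the Levi-Civita connection `nabla`,
the directional derivative `D`, the gradient `grad` and the Lie bracket,
satisfying the usual laws. -/
structure RiemannianSetup (M : Type*) (VF : Type*) [AddCommGroup VF]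
    [Module (M → ℝ) VF] where
  g : VF → VF → M → ℝ
  nabla : VF → VF → VF
  D : VF → (M → ℝ) → M → ℝ
  grad : (M → ℝ) → VF
  bracket : VF → VF → VF
  g_symm : ∀ X Y, g X Y = g Y X
  g_addLeft : ∀ X Y Z, g (X + Y) Z = g X Z + g Y Z
  g_smulLeft : ∀ (f : M → ℝ) (X Y : VF), g (f • X) Y = f * g X Y
  g_nondeg : ∀ X Y : VF, (∀ Z, g X Z = g Y Z) → X = Y
  nabla_addRight : ∀ X Y Z, nabla X (Y + Z) = nabla X Y + nabla X Z
  nabla_addLeft : ∀ X Y Z, nabla (X + Y) Z = nabla X Z + nabla Y Z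
  nabla_smulLeft : ∀ (f : M → ℝ) (X Y : VF), nabla (f • X) Y = f • nabla X Y
  nabla_leibniz : ∀ (X : VF) (f : M → ℝ) (Y : VF),
    nabla X (f • Y) = D X f • Y + f • nabla X Y
  D_add : ∀ X (f₁ f₂ : M → ℝ), D X (f₁ + f₂) = D X f₁ + D X f₂
  D_mul : ∀ X (f₁ f₂ : M → ℝ), D X (f₁ * f₂) = D X f₁ * f₂ + f₁ * D X f₂
  D_const : ∀ X (r : ℝ), D X (fun _ => r) = 0
  D_addLeft : ∀ X Y (f : M → ℝ), D (X + Y) f = D X f + D Y f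
  D_smulLeft : ∀ (h : M → ℝ) X (f : M → ℝ), D (h • X) f = h * D X f
  compat : ∀ X Y Z, D X (g Y Z) = g (nabla X Y) Z + g Y (nabla X Z)
  torsion_free : ∀ X Y, bracket X Y = nabla X Y - nabla Y X
  grad_spec : ∀ (f : M → ℝ) (Z : VF), g (grad f) Z = D Z f

namespace RiemannianSetup

variable {M VF : Type*} [AddCommGroup VF] [Module (M → ℝ) VF]

/-- Covariant derivative `(∇_X A) Y` of a `(1,1)`-tensor `A`. -/
def covDeriv (S : RiemannianSetup M VF) (A : VF → VF) (X Y : VF) : VF :=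
  S.nabla X (A Y) - A (S.nabla X Y)

/-- A Codazzi tensor: a self-adjoint `(1,1)`-tensor with
`(∇_X A) Y = (∇_Y A) X` for all vector fields `X`, `Y`. -/
def IsCodazzi (S : RiemannianSetup M VF) (A : VF → VF) : Prop :=
  (∀ X Y, S.g (A X) Y = S.g X (A Y)) ∧
  (∀ X Y, S.covDeriv A X Y = S.covDeriv A Y X)

end RiemannianSetup

/-!
Pair the Codazzi identity `(∇_Y A) X = (∇_X A) Y`, for `Y ∈ V_λ`, with `X` and with
`Z ∈ V_λ`. Since `V_μ ⟂ V_λ` and `|X| = 1`, this gives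
`D_Y μ = (μ - λ) g(∇_X X, Y)` and `(μ - λ) g(∇_Y X, Z) = (D_X λ) g(Y, Z)`.
The second identity makes `g(∇_· X, ·)` symmetric on `V_λ × V_λ`, and `g(∇_· X, X) = 0`,
so symmetry of the whole form reduces to `g(∇_X X, Y) = g(∇_Y X, X) = 0` for `Y ∈ V_λ`,
which by the first identity says exactly `D_Y μ = 0`.
-/

namespace RiemannianSetup

variable {M VF : Type*} [AddCommGroup VF] [Module (M → ℝ) VF] (S : RiemannianSetup M VF)

lemma g_addRight (X Y Z : VF) : S.g X (Y + Z) = S.g X Y + S.g X Z := by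
  rw [S.g_symm, S.g_addLeft, S.g_symm Y, S.g_symm Z]

lemma g_smulRight (f : M → ℝ) (X Y : VF) : S.g X (f • Y) = f * S.g X Y := by
  rw [S.g_symm, S.g_smulLeft, S.g_symm]

lemma g_subLeft (X Y Z : VF) : S.g (X - Y) Z = S.g X Z - S.g Y Z := by
  rw [eq_sub_iff_add_eq, ← S.g_addLeft, sub_add_cancel]

lemma g_nabla_self_eq_zero_of_g_self_eq_const {X : VF} {c : ℝ} (hX : S.g X X = fun _ => c)
    (W : VF) : S.g (S.nabla W X) X = 0 := by
  have h := S.compat W X X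
  rw [hX, S.D_const, S.g_symm X] at h
  funext p
  have hp := congrFun h p
  simp only [Pi.add_apply, Pi.zero_apply] at hp ⊢
  linarith

lemma g_nabla_eq_neg_of_g_eq_zero {Y Z : VF} (h : S.g Y Z = 0) (W : VF) :
    S.g (S.nabla W Y) Z = -S.g Y (S.nabla W Z) := by
  have hc := S.compat W Y Z
  rw [h, show S.D W 0 = 0 from S.D_const W 0] at hc
  exact eq_neg_of_add_eq_zero_left hc.symm

lemma g_eq_zero_of_eigen {A : VF → VF} (hsa : ∀ X Y, S.g (A X) Y = S.g X (A Y))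
    {mu lam : M → ℝ} (hne : IsUnit (mu - lam)) {X Y : VF}
    (hX : A X = mu • X) (hY : A Y = lam • Y) : S.g X Y = 0 := by
  have h := hsa X Y
  rw [hX, hY, S.g_smulLeft, S.g_smulRight, ← sub_eq_zero, ← sub_mul] at h
  exact hne.mul_right_eq_zero.mp h

lemma g_covDeriv_eigen {A : VF → VF} (hsa : ∀ X Y, S.g (A X) Y = S.g X (A Y))
    {lam nu : M → ℝ} {Y Z : VF} (hY : A Y = lam • Y) (hZ : A Z = nu • Z) (W : VF) :
    S.g (S.covDeriv A W Y) Z = S.D W lam * S.g Y Z + (lam - nu) * S.g (S.nabla W Y) Z := by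
  rw [covDeriv, S.g_subLeft, hsa, hZ, hY, S.nabla_leibniz, S.g_addLeft, S.g_smulLeft,
    S.g_smulLeft, S.g_smulRight]
  ring

lemma g_nabla_add_smul_eq {X Y Z : VF} (hXX : ∀ W, S.g (S.nabla W X) X = 0)
    (hXZ : S.g (S.nabla X X) Z = 0) (a b : M → ℝ) :
    S.g (S.nabla (a • X + Y) X) (b • X + Z) = S.g (S.nabla Y X) Z := by
  rw [S.nabla_addLeft, S.nabla_smulLeft, S.g_addLeft, S.g_smulLeft, S.g_addRight,
    S.g_addRight, S.g_smulRight, S.g_smulRight, hXX, hXX, hXZ]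
  ring

section TwoEigenvalues

variable {A : VF → VF} (hA : S.IsCodazzi A) {mu lam : M → ℝ} (hne : IsUnit (mu - lam))
  {X : VF} (hX : A X = mu • X)
include hA hne hX

lemma D_eq_mul_g_nabla_self (hXunit : S.g X X = 1) {Y : VF} (hY : A Y = lam • Y) :
    S.D Y mu = (mu - lam) * S.g (S.nabla X X) Y := by
  have hXY := S.g_eq_zero_of_eigen hA.1 hne hX hY
  have h := congrArg (S.g · X) (hA.2 Y X)
  simp only [S.g_covDeriv_eigen hA.1 hX hX, S.g_covDeriv_eigen hA.1 hY hX, hXunit, sub_self,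
    S.g_symm Y X, hXY, S.g_nabla_eq_neg_of_g_eq_zero (S.g_symm Y X ▸ hXY)] at h
  rw [S.g_symm Y] at h
  linear_combination h

lemma sub_mul_g_nabla_eq {Y Z : VF} (hY : A Y = lam • Y) (hZ : A Z = lam • Z) :
    (mu - lam) * S.g (S.nabla Y X) Z = S.D X lam * S.g Y Z := by
  have h := congrArg (S.g · Z) (hA.2 Y X)
  simp only [S.g_covDeriv_eigen hA.1 hX hZ, S.g_covDeriv_eigen hA.1 hY hZ, sub_self,
    S.g_eq_zero_of_eigen hA.1 hne hX hZ] at h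
  linear_combination h

lemma g_nabla_symm_of_eigen {Y Z : VF} (hY : A Y = lam • Y) (hZ : A Z = lam • Z) :
    S.g (S.nabla Y X) Z = S.g (S.nabla Z X) Y :=
  hne.mul_left_cancel <| by
    rw [S.sub_mul_g_nabla_eq hA hne hX hY hZ, S.sub_mul_g_nabla_eq hA hne hX hZ hY, S.g_symm Y]

end TwoEigenvalues

end RiemannianSetup

theorem codazzi_gradient_iff_mu_constant_general
    {M VF : Type*} [AddCommGroup VF] [Module (M → ℝ) VF]
    (S : RiemannianSetup M VF) (A : VF → VF) (hA : S.IsCodazzi A)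
    (mu lam : M → ℝ) (hdist : ∀ p, mu p ≠ lam p)
    (X : VF) (hX : A X = mu • X) (hXunit : S.g X X = 1)
    (hdecomp : ∀ Z : VF, ∃ (c : M → ℝ) (Y : VF),
      A Y = lam • Y ∧ Z = c • X + Y) :
    (∀ Y Z : VF, S.g (S.nabla Y X) Z = S.g (S.nabla Z X) Y) ↔
      (∀ Y : VF, A Y = lam • Y → S.D Y mu = 0) := by
  have hne : IsUnit (mu - lam) := Pi.isUnit_iff.mpr fun p => (sub_ne_zero.mpr (hdist p)).isUnit
  have hXX := S.g_nabla_self_eq_zero_of_g_self_eq_const (c := 1) hXunit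
  constructor
  · intro hsymm Y hY
    rw [S.D_eq_mul_g_nabla_self hA hne hX hXunit hY, hsymm, hXX, mul_zero]
  · intro hD Y Z
    have hXV : ∀ W, A W = lam • W → S.g (S.nabla X X) W = 0 := fun W hW =>
      hne.mul_right_eq_zero.mp (S.D_eq_mul_g_nabla_self hA hne hX hXunit hW ▸ hD W hW)
    obtain ⟨a, Y', hY', rfl⟩ := hdecomp Y
    obtain ⟨b, Z', hZ', rfl⟩ := hdecomp Z
    rw [S.g_nabla_add_smul_eq hXX (hXV Z' hZ'), S.g_nabla_add_smul_eq hXX (hXV Y' hY'),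
      S.g_nabla_symm_of_eigen hA hne hX hY' hZ']

/-- For a Codazzi tensor with exactly two distinct eigenfunctions `μ`, `λ`,
`dim V_μ = 1` with unit section `X`: `(Y,Z) ↦ g(∇_Y X, Z)` is symmetric
(equivalently, `X` is locally a gradient field) iff `D_Y μ = 0` for all
`Y ∈ V_λ`. -/
theorem codazzi_gradient_iff_mu_constant
    {M VF : Type*} [AddCommGroup VF] [Module (M → ℝ) VF]
    (n : ℕ) (hn : 3 ≤ n)
    (S : RiemannianSetup M VF) (A : VF → VF) (hA : S.IsCodazzi A)
    (mu lam : M → ℝ) (hdist : ∀ p, mu p ≠ lam p)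
    (X : VF) (hX : A X = mu • X) (hXunit : S.g X X = 1)
    (hdecomp : ∀ Z : VF, ∃ (c : M → ℝ) (Y : VF),
      A Y = lam • Y ∧ Z = c • X + Y) :
    (∀ Y Z : VF, S.g (S.nabla Y X) Z = S.g (S.nabla Z X) Y) ↔
      (∀ Y : VF, A Y = lam • Y → S.D Y mu = 0) :=
  codazzi_gradient_iff_mu_constant_general S A hA mu lam hdist X hX hXunit hdecomp
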